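/- Let n ≥ 1 and let f be n-times differentiable on an open interval containing [a,b] with f^(n) absolutely continuous on [a,b]. Then for every x ∈ [a,(a+b)/2] and every y ∈ [a,b], (1/n)·( (f(x)+f(a+b−x))/2 + Σ_{k=1}^{n−1} ( W_k(x,y) + F_k(y) ) ) − (1/(b−a))·∫_a^b f(t) dt = (1/((b−a)·n!))·∫_a^b (y−t)^{n−1}·S(t,x)·f^(n)(t) dt, where W_k(x,y) = ((−1)^k/(2·k!))·( (x−y)^k·f^{(k)}(x) + (a+b−x−y)^k·f^{(k)}(a+b−x) ) and F_k(y) = ((n−k)/k!)·( f^{(k−1)}(a)·(y−a)^k − f^{(k−1)}(b)·(y−b)^k )/(b−a). -/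

import Mathlib

/-!
Off the single point `t = a + b - x`, the kernel is
`S(t, x) = (t - a) - (b - a) / 2 * (𝟙[x < t] + 𝟙[a + b - x < t])`, so the kernel integral splits
into integrals of `(y - t)^(n-1) f⁽ⁿ⁾(t)` over `[x, b]` and `[a + b - x, b]` and of
`(t - a) (y - t)^(n-1) f⁽ⁿ⁾(t)` over `[a, b]`. Writing `t - a = (y - a) - (y - t)`, everything
reduces to `∫ (y - t)^m f⁽ⁿ⁾(t) dt` with `m = n - 1` or `m = n`, and these are evaluated by
telescoping sums: `p ↦ ∑_{k<n} f⁽ᵏ⁾(p) (y - p)^k / k!` has derivative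
`f⁽ⁿ⁾(p) (y - p)^(n-1) / (n-1)!`, and `p ↦ ∑_{k<n} f⁽ᵏ⁾(p) (y - p)^(k+1) / (k+1)!` has
derivative `f⁽ⁿ⁾(p) (y - p)^n / n! - f(p)`. The rest is algebra on finite sums.
-/

open MeasureTheory Set

/-- The Guessab–Schmeisser / Fink-type kernel `S(t,x)` on `[a,b]`. -/
noncomputable def Skernel (a b x t : ℝ) : ℝ :=
  if t ≤ x then t - a else if t < a + b - x then t - (a + b) / 2 else t - b

/-- `g` is absolutely continuous on `[a,b]`. -/
def AbsCont (g : ℝ → ℝ) (a b : ℝ) : Prop :=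
  ∃ h : ℝ → ℝ, IntervalIntegrable h MeasureTheory.volume a b ∧
    ∀ t ∈ Set.Icc a b, g t = g a + ∫ s in a..t, h s

open Finset
open scoped Nat

section IteratedDeriv

variable {f : ℝ → ℝ} {U : Set ℝ} {n : ℕ}

theorem ContDiffOn.hasDerivAt_iteratedDeriv (hf : ContDiffOn ℝ n f U) (hU : IsOpen U) {k : ℕ}
    (hk : k < n) {t : ℝ} (ht : t ∈ U) :
    HasDerivAt (iteratedDeriv k f) (iteratedDeriv (k + 1) f t) t := by
  have hd := (hf.differentiableOn_iteratedDerivWithin (by exact_mod_cast hk) hU.uniqueDiffOn t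
    ht).differentiableAt (hU.mem_nhds ht)
  rw [iteratedDeriv_succ]
  exact (hd.congr_of_eventuallyEq (Filter.eventuallyEq_of_mem (hU.mem_nhds ht)
    (iteratedDerivWithin_of_isOpen hU).symm)).hasDerivAt

theorem ContDiffOn.continuousOn_iteratedDeriv (hf : ContDiffOn ℝ n f U) (hU : IsOpen U) {k : ℕ}
    (hk : k ≤ n) : ContinuousOn (iteratedDeriv k f) U :=
  (hf.continuousOn_iteratedDerivWithin (by exact_mod_cast hk) hU.uniqueDiffOn).congr
    (iteratedDerivWithin_of_isOpen hU).symm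

end IteratedDeriv

theorem hasDerivAt_sum_range_mul_of_telescoping {g h : ℕ → ℝ → ℝ} {t c : ℝ} (N : ℕ)
    (hg : ∀ k ≤ N, HasDerivAt (g k) (g (k + 1) t) t)
    (hh : ∀ k < N, HasDerivAt (h (k + 1)) (-h k t) t) (hh₀ : HasDerivAt (h 0) c t) :
    HasDerivAt (fun s => ∑ k ∈ range (N + 1), g k s * h k s)
      (g (N + 1) t * h N t + g 0 t * c) t := by
  induction N with
  | zero => simpa [add_comm] using (hg 0 le_rfl).fun_mul hh₀
  | succ N ih =>
    simp only [sum_range_succ _ (N + 1)]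
    exact ((ih (fun k hk => hg k (by omega)) (fun k hk => hh k (by omega))).fun_add
      ((hg (N + 1) le_rfl).fun_mul (hh N (by omega)))).congr_deriv (by ring)

theorem hasDerivAt_sub_pow_succ_div_factorial (y t : ℝ) (k : ℕ) :
    HasDerivAt (fun s => (y - s) ^ (k + 1) / (k + 1)!) (-((y - t) ^ k / k !)) t := by
  refine ((((hasDerivAt_id' t).const_sub y).fun_pow (k + 1)).div_const
    ((k + 1)! : ℝ)).congr_deriv ?_
  rw [Nat.factorial_succ]
  push_cast
  field_simp

noncomputable def taylorSum (f : ℝ → ℝ) (N : ℕ) (p y : ℝ) : ℝ :=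
  ∑ k ∈ range (N + 1), iteratedDeriv k f p * ((y - p) ^ k / k !)

/-- The Taylor polynomial of degree `N + 1` at `p` of an antiderivative of `f`, without its
constant term. -/
noncomputable def antiderivTaylorSum (f : ℝ → ℝ) (N : ℕ) (p y : ℝ) : ℝ :=
  ∑ k ∈ range (N + 1), iteratedDeriv k f p * ((y - p) ^ (k + 1) / (k + 1)!)

section TaylorIntegrals

variable {f : ℝ → ℝ} {U : Set ℝ} {n N : ℕ}

theorem hasDerivAt_taylorSum (hf : ContDiffOn ℝ n f U) (hU : IsOpen U) (hN : N < n) (y : ℝ)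
    {t : ℝ} (ht : t ∈ U) :
    HasDerivAt (fun p => taylorSum f N p y)
      (iteratedDeriv (N + 1) f t * ((y - t) ^ N / N !)) t := by
  refine (hasDerivAt_sum_range_mul_of_telescoping (g := fun k => iteratedDeriv k f)
    (h := fun k s => (y - s) ^ k / k !) (c := 0) N
    (fun k hk => hf.hasDerivAt_iteratedDeriv hU (by omega) ht)
    (fun k _ => hasDerivAt_sub_pow_succ_div_factorial y t k)
    (by simpa using hasDerivAt_const t (1 : ℝ))).congr_deriv ?_
  simp

theorem hasDerivAt_antiderivTaylorSum (hf : ContDiffOn ℝ n f U) (hU : IsOpen U) (hN : N < n)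
    (y : ℝ) {t : ℝ} (ht : t ∈ U) :
    HasDerivAt (fun p => antiderivTaylorSum f N p y)
      (iteratedDeriv (N + 1) f t * ((y - t) ^ (N + 1) / (N + 1)!) - f t) t := by
  refine (hasDerivAt_sum_range_mul_of_telescoping
    (g := fun k => iteratedDeriv k f) (h := fun k s => (y - s) ^ (k + 1) / (k + 1)!) (c := -1) N
    (fun k hk => hf.hasDerivAt_iteratedDeriv hU (by omega) ht)
    (fun k _ => hasDerivAt_sub_pow_succ_div_factorial y t (k + 1))
    (by simpa using hasDerivAt_sub_pow_succ_div_factorial y t 0)).congr_deriv ?_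
  simp [sub_eq_add_neg]

theorem integral_sub_pow_mul_iteratedDeriv (hf : ContDiffOn ℝ n f U) (hU : IsOpen U)
    (hN : N < n) (y : ℝ) {p q : ℝ} (hpq : uIcc p q ⊆ U) :
    ∫ t in p..q, (y - t) ^ N * iteratedDeriv (N + 1) f t
      = N ! * (taylorSum f N q y - taylorSum f N p y) := by
  have hcont := (hf.continuousOn_iteratedDeriv hU hN).mono hpq
  rw [← intervalIntegral.integral_eq_sub_of_hasDerivAt
    (fun t ht => hasDerivAt_taylorSum hf hU hN y (hpq ht))
    (hcont.mul (by fun_prop)).intervalIntegrable, ← intervalIntegral.integral_const_mul]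
  congr 1 with t
  field_simp

theorem integral_sub_pow_succ_mul_iteratedDeriv (hf : ContDiffOn ℝ n f U) (hU : IsOpen U)
    (hN : N < n) (y : ℝ) {p q : ℝ} (hpq : uIcc p q ⊆ U) :
    ∫ t in p..q, (y - t) ^ (N + 1) * iteratedDeriv (N + 1) f t
      = (N + 1)! * (antiderivTaylorSum f N q y - antiderivTaylorSum f N p y
        + ∫ t in p..q, f t) := by
  have hcont : ContinuousOn (iteratedDeriv (N + 1) f) (uIcc p q) :=
    (hf.continuousOn_iteratedDeriv hU hN).mono hpq
  have hgi : IntervalIntegrable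
      (fun t => iteratedDeriv (N + 1) f t * ((y - t) ^ (N + 1) / (N + 1)!)) volume p q :=
    (hcont.mul (by fun_prop)).intervalIntegrable
  have hfi : IntervalIntegrable f volume p q := (hf.continuousOn.mono hpq).intervalIntegrable
  rw [← intervalIntegral.integral_eq_sub_of_hasDerivAt
    (fun t ht => hasDerivAt_antiderivTaylorSum hf hU hN y (hpq ht)) (hgi.sub hfi),
    intervalIntegral.integral_sub hgi hfi,
    sub_add_cancel, ← intervalIntegral.integral_const_mul]
  congr 1 with t
  field_simp

end TaylorIntegrals

section Kernel

variable {a b x : ℝ} {g : ℝ → ℝ}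

theorem mul_Skernel_eq_of_ne (hx : x ≤ (a + b) / 2) {t : ℝ} (ht : t ≠ a + b - x) :
    g t * Skernel a b x t = g t * (t - a)
      - (b - a) / 2 * ((Ioi x).indicator g t + (Ioi (a + b - x)).indicator g t) := by
  simp only [Skernel, indicator_apply, Set.mem_Ioi]
  split_ifs <;> first | (exfalso; linarith) | (exact absurd (by linarith) ht) | ring

theorem integral_indicator_Ioi {p : ℝ} (hp : p ∈ Icc a b)
    (hg : IntervalIntegrable g volume a b) :
    ∫ t in a..b, (Ioi p).indicator g t = ∫ t in p..b, g t := by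
  have hIic : ∫ t in a..b, (Iic p).indicator g t = ∫ t in a..p, g t :=
    intervalIntegral.integral_indicator hp
  rw [← compl_Iic, indicator_compl, Pi.sub_def, intervalIntegral.integral_sub hg
    ⟨hg.1.indicator measurableSet_Iic, hg.2.indicator measurableSet_Iic⟩, hIic]
  exact intervalIntegral.integral_interval_sub_left hg
    (hg.mono_set (Set.uIcc_subset_uIcc_left (Icc_subset_uIcc hp)))

theorem integral_mul_Skernel (hg : IntervalIntegrable g volume a b)
    (hx : x ∈ Icc a ((a + b) / 2)) :
    ∫ t in a..b, g t * Skernel a b x t = (∫ t in a..b, g t * (t - a))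
      - (b - a) / 2 * ((∫ t in x..b, g t) + ∫ t in (a + b - x)..b, g t) := by
  have hindicator (p : ℝ) : IntervalIntegrable ((Ioi p).indicator g) volume a b :=
    ⟨hg.1.indicator measurableSet_Ioi, hg.2.indicator measurableSet_Ioi⟩
  rw [intervalIntegral.integral_congr_ae ((Measure.ae_ne volume (a + b - x)).mono
      fun t ht _ => mul_Skernel_eq_of_ne hx.2 ht),
    intervalIntegral.integral_sub (hg.mul_continuousOn (by fun_prop))
      (((hindicator x).add (hindicator _)).const_mul _),
    intervalIntegral.integral_const_mul,
    intervalIntegral.integral_add (hindicator x) (hindicator _),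
    integral_indicator_Ioi ⟨hx.1, by linarith [hx.1, hx.2]⟩ hg,
    integral_indicator_Ioi ⟨by linarith [hx.1, hx.2], by linarith [hx.1, hx.2]⟩ hg]

end Kernel

theorem integral_sub_pow_mul_Skernel_mul_iteratedDeriv {f : ℝ → ℝ} {U : Set ℝ} {n N : ℕ}
    {a b x : ℝ} (hf : ContDiffOn ℝ n f U) (hU : IsOpen U) (hN : N < n) (hab : Icc a b ⊆ U)
    (hx : x ∈ Icc a ((a + b) / 2)) (y : ℝ) :
    ∫ t in a..b, (y - t) ^ N * Skernel a b x t * iteratedDeriv (N + 1) f t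
      = N ! * ((y - a) * (taylorSum f N b y - taylorSum f N a y)
          - (b - a) / 2 * (2 * taylorSum f N b y - taylorSum f N x y
            - taylorSum f N (a + b - x) y))
        - (N + 1)! * (antiderivTaylorSum f N b y - antiderivTaylorSum f N a y
          + ∫ t in a..b, f t) := by
  obtain ⟨hax, hxm⟩ := hx
  have hab' : uIcc a b ⊆ U := by rwa [Set.uIcc_of_le (by linarith)]
  have htail {p : ℝ} (hp : p ∈ Icc a b) : uIcc p b ⊆ U :=
    (uIcc_subset_uIcc (Icc_subset_uIcc hp) right_mem_uIcc).trans hab'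
  have hcont : ContinuousOn (iteratedDeriv (N + 1) f) (uIcc a b) :=
    (hf.continuousOn_iteratedDeriv hU hN).mono hab'
  have hg : IntervalIntegrable (fun t => (y - t) ^ N * iteratedDeriv (N + 1) f t) volume a b :=
    ((continuousOn_const.sub continuousOn_id).pow N |>.mul hcont).intervalIntegrable
  have hg' : IntervalIntegrable (fun t => (y - t) ^ (N + 1) * iteratedDeriv (N + 1) f t)
      volume a b :=
    ((continuousOn_const.sub continuousOn_id).pow (N + 1) |>.mul hcont).intervalIntegrable
  have hlinear : ∫ t in a..b, (y - t) ^ N * iteratedDeriv (N + 1) f t * (t - a)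
      = (y - a) * (∫ t in a..b, (y - t) ^ N * iteratedDeriv (N + 1) f t)
        - ∫ t in a..b, (y - t) ^ (N + 1) * iteratedDeriv (N + 1) f t := by
    rw [← intervalIntegral.integral_const_mul,
      ← intervalIntegral.integral_sub (hg.const_mul _) hg']
    congr 1 with t
    ring
  calc ∫ t in a..b, (y - t) ^ N * Skernel a b x t * iteratedDeriv (N + 1) f t
      = ∫ t in a..b, (y - t) ^ N * iteratedDeriv (N + 1) f t * Skernel a b x t := by
        congr 1 with t
        ring
    _ = _ := by
      rw [integral_mul_Skernel hg ⟨hax, hxm⟩, hlinear,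
        integral_sub_pow_mul_iteratedDeriv hf hU hN y hab',
        integral_sub_pow_succ_mul_iteratedDeriv hf hU hN y hab',
        integral_sub_pow_mul_iteratedDeriv hf hU hN y (htail ⟨hax, by linarith⟩),
        integral_sub_pow_mul_iteratedDeriv hf hU hN y (htail ⟨by linarith, by linarith⟩)]
      ring

theorem sum_Icc_one_eq_sum_range {M : Type*} [AddCommMonoid M] (u : ℕ → M) (N : ℕ) :
    ∑ k ∈ Icc 1 N, u k = ∑ k ∈ range N, u (k + 1) := by
  rw [← Finset.Ico_add_one_right_eq_Icc, Finset.sum_Ico_eq_sum_range]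
  simp [add_comm]

theorem sum_Icc_neg_one_pow_mul_iteratedDeriv (f : ℝ → ℝ) (N : ℕ) (p y : ℝ) :
    ∑ k ∈ Icc 1 N, (-1 : ℝ) ^ k / (2 * k !) * ((p - y) ^ k * iteratedDeriv k f p)
      = (taylorSum f N p y - f p) / 2 := by
  rw [taylorSum, sum_range_succ', sum_Icc_one_eq_sum_range]
  simp only [iteratedDeriv_zero, pow_zero, Nat.factorial_zero, Nat.cast_one, div_one, mul_one,
    add_sub_cancel_right, sum_div]
  refine sum_congr rfl fun k _ => ?_
  rw [show (y - p) ^ (k + 1) = (-1) ^ (k + 1) * (p - y) ^ (k + 1) by rw [← mul_pow]; ring]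
  field_simp

theorem sum_Icc_mul_iteratedDeriv_pred (f : ℝ → ℝ) (N : ℕ) (p y : ℝ) :
    ∑ k ∈ Icc 1 N, ((N : ℝ) + 1 - k) / k ! * (iteratedDeriv (k - 1) f p * (y - p) ^ k)
      = (N + 1) * antiderivTaylorSum f N p y - (y - p) * taylorSum f N p y := by
  rw [sum_Icc_one_eq_sum_range, antiderivTaylorSum, taylorSum, mul_sum, mul_sum,
    ← sum_sub_distrib, sum_range_succ _ N]
  have hlast : ((N : ℝ) + 1) * (iteratedDeriv N f p * ((y - p) ^ (N + 1) / (N + 1)!))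
      - (y - p) * (iteratedDeriv N f p * ((y - p) ^ N / N !)) = 0 := by
    push_cast [Nat.factorial_succ]
    field_simp
    ring
  rw [hlast, add_zero]
  refine sum_congr rfl fun k _ => ?_
  push_cast [Nat.factorial_succ, Nat.add_sub_cancel]
  field_simp
  ring

theorem stmt_12_general (n : ℕ) (hn : 1 ≤ n) (a b c d : ℝ) (hab : a < b)
    (hca : c < a) (hbd : b < d) (f : ℝ → ℝ)
    (hf : ContDiffOn ℝ (n : ℕ∞) f (Set.Ioo c d))
    (x : ℝ) (hx : x ∈ Set.Icc a ((a + b) / 2)) (y : ℝ) :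
    (1 / (n : ℝ)) *
        ((f x + f (a + b - x)) / 2 +
          ∑ k ∈ Finset.Icc 1 (n - 1),
            (((-1 : ℝ) ^ k / (2 * (k.factorial : ℝ))) *
                ((x - y) ^ k * iteratedDeriv k f x +
                  (a + b - x - y) ^ k * iteratedDeriv k f (a + b - x))
              + (((n : ℝ) - k) / (k.factorial : ℝ)) *
                  ((iteratedDeriv (k - 1) f a * (y - a) ^ k -
                      iteratedDeriv (k - 1) f b * (y - b) ^ k) / (b - a))))
      - (1 / (b - a)) * ∫ t in a..b, f t
    = (1 / ((b - a) * (n.factorial : ℝ))) *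
        ∫ t in a..b, (y - t) ^ (n - 1) * Skernel a b x t * iteratedDeriv n f t := by
  obtain ⟨N, rfl⟩ : ∃ N, n = N + 1 := ⟨n - 1, by omega⟩
  rw [Nat.add_sub_cancel, integral_sub_pow_mul_Skernel_mul_iteratedDeriv hf isOpen_Ioo
    N.lt_succ_self (Icc_subset_Ioo hca hbd) hx y]
  push_cast [Nat.factorial_succ]
  simp only [mul_add, sum_add_distrib, sum_Icc_neg_one_pow_mul_iteratedDeriv, mul_div_assoc',
    ← sum_div, mul_sub, sum_sub_distrib, sum_Icc_mul_iteratedDeriv_pred]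
  have hba : b - a ≠ 0 := sub_ne_zero.2 hab.ne'
  field_simp
  ring

theorem stmt_12 (n : ℕ) (hn : 1 ≤ n) (a b c d : ℝ) (hab : a < b)
    (hca : c < a) (hbd : b < d) (f : ℝ → ℝ)
    (hf : ContDiffOn ℝ (n : ℕ∞) f (Set.Ioo c d))
    (hAC : AbsCont (iteratedDeriv n f) a b)
    (x : ℝ) (hx : x ∈ Set.Icc a ((a + b) / 2)) (y : ℝ) (hy : y ∈ Set.Icc a b) :
    (1 / (n : ℝ)) *
        ((f x + f (a + b - x)) / 2 +
          ∑ k ∈ Finset.Icc 1 (n - 1),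
            (((-1 : ℝ) ^ k / (2 * (k.factorial : ℝ))) *
                ((x - y) ^ k * iteratedDeriv k f x +
                  (a + b - x - y) ^ k * iteratedDeriv k f (a + b - x))
              + (((n : ℝ) - k) / (k.factorial : ℝ)) *
                  ((iteratedDeriv (k - 1) f a * (y - a) ^ k -
                      iteratedDeriv (k - 1) f b * (y - b) ^ k) / (b - a))))
      - (1 / (b - a)) * ∫ t in a..b, f t
    = (1 / ((b - a) * (n.factorial : ℝ))) *
        ∫ t in a..b, (y - t) ^ (n - 1) * Skernel a b x t * iteratedDeriv n f t :=
  stmt_12_general n hn a b c d hab hca hbd f hf x hx y
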